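/- arXiv:0803.3525 — 4 statements merged into one kernel-verified Lean document; each statement's English description precedes it below -/
import Mathlib

section
/- Every Nikodym set B in F_q^n satisfies |B| >= C(n+q-2, n). -/
open MvPolynomial


lemma finite_S (n d : ℕ) : {s : Fin n →₀ ℕ | (s.sum fun _ e => e) ≤ d}.Finite := by
  have h1 : {f : Fin n →₀ ℕ | ∀ a, f a ≤ d}.Finite :=
    ((Set.Finite.pi' fun _ ↦ Set.finite_le_nat _).preimage DFunLike.coe_injective.injOn)
  exact h1.subset fun s hs i ↦ (eq_or_ne (s i) 0).elim (fun h ↦ h.trans_le d.zero_le) fun h ↦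
    ((Finset.single_le_sum (fun _ _ ↦ Nat.zero_le _) <| Finsupp.mem_support_iff.mpr h).trans hs)

lemma sum_count_option {β : Type} [Fintype β] [DecidableEq β] (M : Multiset (Option β)) :
    ∑ o : Option β, M.count o = Multiset.card M := by
  rw [← Multiset.toFinset_sum_count_eq M]
  exact (Finset.sum_subset (Finset.subset_univ _) (fun x _ hx =>
    Multiset.count_eq_zero.mpr (fun h => hx (Multiset.mem_toFinset.mpr h)))).symm

lemma card_le_S (n d : ℕ) :
    (n + d).choose n ≤ Nat.card {s : Fin n →₀ ℕ | (s.sum fun _ e => e) ≤ d} := by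
  classical
  have hfin : Finite {s : Fin n →₀ ℕ | (s.sum fun _ e => e) ≤ d} := (finite_S n d).to_subtype
  have hsum : ∀ M : Sym (Option (Fin n)) d, ∑ i : Fin n, (M : Multiset (Option (Fin n))).count (some i) ≤ d := by
    intro M
    have h1 := sum_count_option (M : Multiset (Option (Fin n)))
    rw [Fintype.sum_option] at h1
    have h2 : Multiset.card (M : Multiset (Option (Fin n))) = d := M.2
    omega
  let Φ : Sym (Option (Fin n)) d → {s : Fin n →₀ ℕ | (s.sum fun _ e => e) ≤ d} := fun M =>
    ⟨Finsupp.equivFunOnFinite.symm (fun i => (M : Multiset (Option (Fin n))).count (some i)), by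
      show Finsupp.sum _ _ ≤ d
      rw [Finsupp.sum_fintype _ _ (fun _ => rfl)]
      simpa using hsum M⟩
  have hinj : Function.Injective Φ := by
    intro M M' h
    have h1 : ∀ i : Fin n, (M : Multiset (Option (Fin n))).count (some i)
        = (M' : Multiset (Option (Fin n))).count (some i) := by
      intro i
      have := congrArg (fun s : {s : Fin n →₀ ℕ | (s.sum fun _ e => e) ≤ d} => (s : Fin n →₀ ℕ) i) h
      simpa [Φ] using this
    have h2 : (M : Multiset (Option (Fin n))).count none
        = (M' : Multiset (Option (Fin n))).count none := by
      have e1 := sum_count_option (M : Multiset (Option (Fin n)))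
      have e2 := sum_count_option (M' : Multiset (Option (Fin n)))
      rw [Fintype.sum_option] at e1 e2
      have hM : Multiset.card (M : Multiset (Option (Fin n))) = d := M.2
      have hM' : Multiset.card (M' : Multiset (Option (Fin n))) = d := M'.2
      rw [hM, Finset.sum_congr rfl (fun i _ => h1 i)] at e1
      rw [hM'] at e2
      omega
    apply Subtype.ext
    apply Multiset.ext.mpr
    intro o
    cases o with
    | none => exact h2
    | some i => exact h1 i
  calc (n + d).choose n = Nat.card (Sym (Option (Fin n)) d) := by
        rw [Nat.card_eq_fintype_card, Sym.card_sym_eq_choose]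
        simp only [Fintype.card_option, Fintype.card_fin]
        have h3 : n + 1 + d - 1 = n + d := by omega
        rw [h3, ← Nat.choose_symm (Nat.le_add_left d n), Nat.add_sub_cancel]
    _ ≤ _ := Nat.card_le_card_of_injective Φ hinj


lemma natDegree_aeval_le {F : Type} [Field F] {n : ℕ} (p : MvPolynomial (Fin n) F)
    (f : Fin n → Polynomial F) (hf : ∀ i, (f i).natDegree ≤ 1) :
    (aeval f p).natDegree ≤ p.totalDegree := by
  classical
  rw [aeval_def, eval₂_eq]
  refine Polynomial.natDegree_sum_le_of_forall_le _ _ (fun s hs => ?_)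
  calc (algebraMap F (Polynomial F) (coeff s p) * ∏ i ∈ s.support, f i ^ s i).natDegree
      ≤ (algebraMap F (Polynomial F) (coeff s p)).natDegree
        + (∏ i ∈ s.support, f i ^ s i).natDegree := Polynomial.natDegree_mul_le
    _ ≤ 0 + ∑ i ∈ s.support, (f i ^ s i).natDegree := by
        gcongr
        · rw [Polynomial.algebraMap_eq]; exact le_of_eq (Polynomial.natDegree_C _)
        · exact Polynomial.natDegree_prod_le _ _
    _ ≤ ∑ i ∈ s.support, s i * 1 := by
        rw [zero_add]
        exact Finset.sum_le_sum fun i _ =>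
          Polynomial.natDegree_pow_le.trans (Nat.mul_le_mul_left _ (hf i))
    _ = s.sum fun _ e => e := by simp [Finsupp.sum]
    _ ≤ p.totalDegree := le_totalDegree hs

lemma eval_line_poly {F : Type} [Field F] {n : ℕ} (p : MvPolynomial (Fin n) F)
    (a v : Fin n → F) (t : F) :
    Polynomial.eval t (aeval (fun i => Polynomial.C (a i) + Polynomial.C (v i) * Polynomial.X) p)
      = eval (a + t • v) p := by
  have h := MvPolynomial.comp_aeval
    (f := fun i => Polynomial.C (a i) + Polynomial.C (v i) * Polynomial.X)
    (Polynomial.aeval t)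
  have h2 := congrArg (fun ψ : MvPolynomial (Fin n) F →ₐ[F] F => ψ p) h
  simp only [AlgHom.comp_apply] at h2
  simp only [map_add, map_mul, Polynomial.aeval_C, Polynomial.aeval_X,
    Algebra.algebraMap_self, RingHom.id_apply, Polynomial.coe_aeval_eq_eval] at h2
  rw [h2, aeval_def, Algebra.algebraMap_self, eval₂_id]
  have h3 : (fun i => a i + v i * t) = a + t • v := by
    funext i; simp [mul_comm]
  rw [h3]

/-- The line through `a` with direction `v`. -/
def line {n : ℕ} {F : Type} [Field F] (a v : Fin n → F) : Set (Fin n → F) :=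
  {y | ∃ t : F, y = a + t • v}

/-- A set `B ⊆ F^n` is Nikodym if every point of the complement lies on a line
meeting the complement only at that point. -/
def IsNikodym {n : ℕ} {F : Type} [Field F] (B : Set (Fin n → F)) : Prop :=
  ∀ x ∉ B, ∃ a v : Fin n → F, v ≠ 0 ∧ line a v ∩ Bᶜ = {x}

theorem stmt_4 (F : Type) [Field F] [Fintype F] (n : ℕ)
    (B : Set (Fin n → F)) (hB : IsNikodym B) :
    (n + Fintype.card F - 2).choose n ≤ B.ncard := by
  classical
  by_contra hcon
  push_neg at hcon
  have hq2 : 2 ≤ Fintype.card F := Fintype.one_lt_card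
  set q := Fintype.card F with hq
  set d : ℕ := q - 2 with hd
  have hnd : n + q - 2 = n + d := by omega
  rw [hnd] at hcon
  set S : Set (Fin n →₀ ℕ) := {s | (s.sum fun _ e => e) ≤ d} with hS
  haveI : Finite ↥S := (finite_S n d).to_subtype
  haveI := Fintype.ofFinite ↥S
  haveI := (Set.toFinite B).fintype
  set V := restrictTotalDegree (Fin n) F d with hV
  let L : V →ₗ[F] (↥B → F) :=
    (LinearMap.funLeft F F (Subtype.val : ↥B → (Fin n → F))).comp
      ((evalₗ F (Fin n)).comp V.subtype)
  have hfr : (n + d).choose n ≤ Module.finrank F V := by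
    have hb : Module.finrank F V = Fintype.card ↥S :=
      Module.finrank_eq_card_basis (basisRestrictSupport F S)
    rw [hb, ← Nat.card_eq_fintype_card]
    exact card_le_S n d
  have hL : ¬ Function.Injective L := by
    intro hinj
    have h1 := LinearMap.finrank_le_finrank_of_injective hinj
    rw [Module.finrank_fintype_fun_eq_card] at h1
    have hcard : Fintype.card ↥B = B.ncard := by
      rw [← Nat.card_eq_fintype_card, Nat.card_coe_set_eq]
    omega
  have hker : LinearMap.ker L ≠ ⊥ := fun h => hL (LinearMap.ker_eq_bot.mp h)
  obtain ⟨p, hpk, hp0⟩ := Submodule.exists_mem_ne_zero_of_ne_bot hker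
  have hzero : ∀ b : Fin n → F, b ∈ B → eval b (p : MvPolynomial (Fin n) F) = 0 := by
    intro b hb'
    have := congrFun (LinearMap.mem_ker.mp hpk) ⟨b, hb'⟩
    simpa [L] using this
  have hdeg : (p : MvPolynomial (Fin n) F).totalDegree ≤ d := by
    exact (mem_restrictTotalDegree (Fin n) d ((p : MvPolynomial (Fin n) F))).mp p.2
  have hall : ∀ x : Fin n → F, eval x (p : MvPolynomial (Fin n) F) = 0 := by
    intro x
    by_cases hx : x ∈ B
    · exact hzero x hx
    · obtain ⟨a, v, hv, hline⟩ := hB x hx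
      have hxline : x ∈ line a v := by
        have : x ∈ line a v ∩ Bᶜ := by rw [hline]; rfl
        exact this.1
      obtain ⟨t₀, ht₀⟩ := hxline
      have hinj2 : ∀ t t' : F, a + t • v = a + t' • v → t = t' := by
        intro t t' h
        have h1 : (t - t') • v = 0 := by
          rw [sub_smul, sub_eq_zero]
          exact add_left_cancel h
        rcases smul_eq_zero.mp h1 with h2 | h2
        · exact sub_eq_zero.mp h2
        · exact absurd h2 hv
      set g : Polynomial F :=
        aeval (fun i => Polynomial.C (a i) + Polynomial.C (v i) * Polynomial.X)
          (p : MvPolynomial (Fin n) F) with hg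
      have hgdeg : g.natDegree ≤ d := by
        refine (natDegree_aeval_le _ _ (fun i => ?_)).trans hdeg
        calc (Polynomial.C (a i) + Polynomial.C (v i) * Polynomial.X).natDegree
            ≤ max (Polynomial.C (a i)).natDegree
              (Polynomial.C (v i) * Polynomial.X).natDegree := Polynomial.natDegree_add_le _ _
          _ ≤ 1 := by
              simp only [Polynomial.natDegree_C, max_le_iff]
              exact ⟨Nat.zero_le _,
                (Polynomial.natDegree_C_mul_le _ _).trans Polynomial.natDegree_X_le⟩
      have hgz : g = 0 := by
        refine Polynomial.eq_zero_of_natDegree_lt_card_of_eval_eq_zero' g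
          (Finset.univ.erase t₀) (fun t ht => ?_) ?_
        · have ht' : t ≠ t₀ := Finset.ne_of_mem_erase ht
          have hmem : a + t • v ∈ B := by
            by_contra hnb
            have : a + t • v ∈ line a v ∩ Bᶜ := ⟨⟨t, rfl⟩, hnb⟩
            rw [hline] at this
            exact ht' (hinj2 t t₀ (by rw [this, ht₀]))
          rw [hg, eval_line_poly]
          exact hzero _ hmem
        · rw [Finset.card_erase_of_mem (Finset.mem_univ _), Finset.card_univ]
          exact lt_of_le_of_lt hgdeg (by omega)
      have : Polynomial.eval t₀ g = 0 := by rw [hgz]; simp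
      rw [hg, eval_line_poly, ← ht₀] at this
      exact this
  have hmem : (p : MvPolynomial (Fin n) F) ∈ restrictDegree (Fin n) F (Fintype.card F - 1) := by
    refine restrictTotalDegree_le_restrictDegree (Fin n) F (q - 1) ?_
    have hdq : d ≤ q - 1 := by omega
    exact restrictSupport_mono F (fun s hs => le_trans hs hdq) p.2
  have := eq_zero_of_eval_eq_zero (Fin n) F (p : MvPolynomial (Fin n) F) hall hmem
  exact hp0 (Subtype.ext this)
end

section
/- Every Nikodym set B in F_q^n satisfies |B| >= C(n+q-2, n) >= q^n / n! * (1 - 1/q)^n, in particular |B| >= C_n * q^n for a constant C_n depending only on n (for q >= 2). -/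
/-!
If `|B| < C(n+q-2, n)`, the dimension of the space of polynomials of total degree at most `q - 2`
in `n` variables, some nonzero such `P` vanishes on `B`. For `x ∉ B`, the Nikodym line through `x`
lies in `B` apart from `x`, so `P` restricted to it is a univariate polynomial of degree at most
`q - 2` with `q - 1` roots; hence it is zero and `P x = 0`. Thus `P` vanishes on all of `F_q^n`
while its degree in each variable is below `q`, which forces `P = 0`. The second bound is
`C(N, n) ≥ (N + 1 - n)^n / n!`.
-/

open MvPolynomial Finset

theorem Finsupp.natCard_setOf_sum_le (σ : Type*) [Fintype σ] (m : ℕ) :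
    Nat.card {d : σ →₀ ℕ | (d.sum fun _ e => e) ≤ m} =
      (m + Fintype.card σ).choose (Fintype.card σ) := by
  classical
  have hset : {d : σ →₀ ℕ | (d.sum fun _ e => e) ≤ m} =
      ↑((range (m + 1)).biUnion fun k => (univ : Finset σ).finsuppAntidiag k) := by
    ext d
    simp [Finsupp.sum_fintype]
  have hdisj : ((range (m + 1) : Finset ℕ) : Set ℕ).PairwiseDisjoint
      fun k => (univ : Finset σ).finsuppAntidiag k := by
    intro k _ l _ hkl
    refine Finset.disjoint_left.2 fun d hk hl => hkl ?_
    rw [mem_finsuppAntidiag] at hk hl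
    exact hk.1.symm.trans hl.1
  rw [hset, Nat.card_coe_set_eq, Set.ncard_coe_finset, card_biUnion hdisj]
  simp only [card_finsuppAntidiag_nat_eq_multichoose, card_univ]
  exact Nat.sum_range_multichoose m _

theorem MvPolynomial.finrank_restrictTotalDegree (σ R : Type*) [Fintype σ] [CommRing R]
    [Nontrivial R] (m : ℕ) :
    Module.finrank R (restrictTotalDegree σ R m) =
      (m + Fintype.card σ).choose (Fintype.card σ) :=
  (Module.finrank_eq_nat_card_basis (basisRestrictSupport R _)).trans
    (Finsupp.natCard_setOf_sum_le σ m)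

theorem MvPolynomial.exists_ne_zero_mem_forall_eval_eq_zero {σ F : Type*} [Field F]
    (W : Submodule F (MvPolynomial σ F)) [FiniteDimensional F W] {S : Set (σ → F)}
    (hS : S.Finite) (hcard : S.ncard < Module.finrank F W) :
    ∃ P ∈ W, P ≠ 0 ∧ ∀ x ∈ S, eval x P = 0 := by
  have := hS.fintype
  let evalOnS : W →ₗ[F] (S → F) :=
    LinearMap.funLeft F F (Subtype.val : S → σ → F) ∘ₗ evalₗ F σ ∘ₗ W.subtype
  have hrank : Module.finrank F (S → F) < Module.finrank F W := by
    rwa [Module.finrank_fintype_fun_eq_card, ← Nat.card_eq_fintype_card, Nat.card_coe_set_eq]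
  obtain ⟨⟨P, hPW⟩, hker, hP⟩ := Submodule.exists_mem_ne_zero_of_ne_bot
    (LinearMap.ker_ne_bot_of_finrank_lt hrank)
  refine ⟨P, hPW, fun h => hP (Subtype.ext h), fun x hx =>
    congrFun (LinearMap.mem_ker.1 hker : evalOnS ⟨P, hPW⟩ = 0) ⟨x, hx⟩⟩

namespace MvPolynomial

variable {σ R : Type*} [CommRing R]

noncomputable def restrictToLine (P : MvPolynomial σ R) (a v : σ → R) : Polynomial R :=
  aeval (fun i => Polynomial.C (a i) + Polynomial.C (v i) * Polynomial.X) P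

theorem eval_restrictToLine (P : MvPolynomial σ R) (a v : σ → R) (t : R) :
    (P.restrictToLine a v).eval t = eval (a + t • v) P := by
  induction P using MvPolynomial.induction_on with
  | C c => simp [restrictToLine]
  | add p q hp hq => simp_all [restrictToLine]
  | mul_X p i hp =>
    simp only [restrictToLine, map_mul, aeval_X, Polynomial.eval_mul, Polynomial.eval_add,
      Polynomial.eval_C, Polynomial.eval_X, eval_X] at hp ⊢
    rw [hp]
    simp only [Pi.add_apply, Pi.smul_apply, smul_eq_mul]
    ring

theorem natDegree_aeval_le_totalDegree (P : MvPolynomial σ R) {g : σ → Polynomial R}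
    (hg : ∀ i, (g i).natDegree ≤ 1) :
    (aeval g P).natDegree ≤ P.totalDegree := by
  classical
  rw [aeval_def, eval₂_eq]
  refine Polynomial.natDegree_sum_le_of_forall_le _ _ fun d hd => ?_
  refine (Polynomial.natDegree_C_mul_le _ _).trans <| (Polynomial.natDegree_prod_le _ _).trans ?_
  calc ∑ i ∈ d.support, (g i ^ d i).natDegree
      ≤ ∑ i ∈ d.support, d i := sum_le_sum fun i _ =>
        Polynomial.natDegree_pow_le.trans (by simpa using Nat.mul_le_mul_left (d i) (hg i))
    _ ≤ P.totalDegree := le_totalDegree hd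

theorem natDegree_restrictToLine_le (P : MvPolynomial σ R) (a v : σ → R) :
    (P.restrictToLine a v).natDegree ≤ P.totalDegree :=
  natDegree_aeval_le_totalDegree P fun i =>
    (Polynomial.natDegree_add_le _ _).trans <| max_le (by simp) <|
      (Polynomial.natDegree_C_mul_le _ _).trans Polynomial.natDegree_X_le

theorem eval_eq_zero_of_forall_ne_eval_eq_zero {F : Type*} [Field F] [Fintype F]
    {P : MvPolynomial σ F} (hP : P.totalDegree + 2 ≤ Fintype.card F) (a v : σ → F) (t₀ : F)
    (hzero : ∀ t ≠ t₀, eval (a + t • v) P = 0) :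
    eval (a + t₀ • v) P = 0 := by
  classical
  have hline : P.restrictToLine a v = 0 := by
    refine Polynomial.eq_zero_of_natDegree_lt_card_of_eval_eq_zero _ Subtype.val_injective
      (fun t : {t // t ≠ t₀} => (eval_restrictToLine P a v t).trans (hzero t t.2)) ?_
    rw [Fintype.card_subtype_compl, Fintype.card_subtype_eq]
    have := natDegree_restrictToLine_le P a v
    omega
  rw [← eval_restrictToLine, hline, Polynomial.eval_zero]

end MvPolynomial

theorem IsNikodym.eval_eq_zero {n : ℕ} {F : Type} [Field F] [Fintype F] {B : Set (Fin n → F)}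
    (hB : IsNikodym B) {P : MvPolynomial (Fin n) F} (hP : P.totalDegree + 2 ≤ Fintype.card F)
    (hPB : ∀ x ∈ B, eval x P = 0) (x : Fin n → F) : eval x P = 0 := by
  by_cases hx : x ∈ B
  · exact hPB x hx
  obtain ⟨a, v, hv, hline⟩ := hB x hx
  obtain ⟨t₀, rfl⟩ : x ∈ line a v := (hline.symm ▸ rfl : x ∈ line a v ∩ Bᶜ).1
  refine eval_eq_zero_of_forall_ne_eval_eq_zero hP a v t₀ fun t ht => hPB _ ?_
  by_contra hnotB
  have hmem : a + t • v ∈ line a v ∩ Bᶜ := ⟨⟨t, rfl⟩, hnotB⟩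
  rw [hline, Set.mem_singleton_iff] at hmem
  exact ht (smul_left_injective F hv (add_left_cancel hmem))

theorem IsNikodym.choose_le_ncard {n : ℕ} {F : Type} [Field F] [Fintype F]
    {B : Set (Fin n → F)} (hB : IsNikodym B) :
    (n + Fintype.card F - 2).choose n ≤ B.ncard := by
  have hq : 2 ≤ Fintype.card F := Fintype.one_lt_card
  by_contra! hcard
  obtain ⟨P, hPW, hP0, hPB⟩ := exists_ne_zero_mem_forall_eval_eq_zero
    (restrictTotalDegree (Fin n) F (Fintype.card F - 2)) B.toFinite <| by
      rwa [finrank_restrictTotalDegree, Fintype.card_fin,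
        show Fintype.card F - 2 + n = n + Fintype.card F - 2 by omega]
  have hdeg := (mem_restrictTotalDegree _ _ _).1 hPW
  refine hP0 (eq_zero_of_eval_eq_zero (Fin n) F P (hB.eval_eq_zero (by omega) hPB) ?_)
  exact restrictTotalDegree_le_restrictDegree _ _ _
    ((mem_restrictTotalDegree _ _ _).2 (by omega))

theorem Nat.sub_one_pow_div_factorial_le_choose {n q : ℕ} (hq : 2 ≤ q) :
    ((q : ℝ) - 1) ^ n / n.factorial ≤ (n + q - 2).choose n := by
  have key := Nat.pow_le_choose (α := ℝ) n (n + q - 2)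
  rwa [show n + q - 2 + 1 - n = q - 1 by omega, Nat.cast_sub (by omega), Nat.cast_one] at key

theorem stmt_5 (n : ℕ) :
    (∀ (F : Type) [Field F] [Fintype F] (B : Set (Fin n → F)), IsNikodym B →
      (n + Fintype.card F - 2).choose n ≤ B.ncard ∧
      (((n + Fintype.card F - 2).choose n : ℝ) ≥
        (Fintype.card F : ℝ) ^ n / (n.factorial : ℝ) *
          (1 - 1 / (Fintype.card F : ℝ)) ^ n)) ∧
    ∃ C : ℝ, 0 < C ∧
      ∀ (F : Type) [Field F] [Fintype F], 2 ≤ Fintype.card F →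
        ∀ B : Set (Fin n → F), IsNikodym B →
          (B.ncard : ℝ) ≥ C * (Fintype.card F : ℝ) ^ n := by
  refine ⟨fun F _ _ B hB => ⟨hB.choose_le_ncard, ?_⟩,
    1 / (2 ^ n * n.factorial), by positivity, fun F _ _ hq B hB => ?_⟩
  · have hq : 2 ≤ Fintype.card F := Fintype.one_lt_card
    have hq0 : (Fintype.card F : ℝ) ≠ 0 := by positivity
    rw [ge_iff_le, div_mul_eq_mul_div, ← mul_pow, mul_one_sub, mul_one_div_cancel hq0]
    exact Nat.sub_one_pow_div_factorial_le_choose hq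
  · have hq' : (2 : ℝ) ≤ Fintype.card F := by exact_mod_cast hq
    calc 1 / (2 ^ n * n.factorial) * (Fintype.card F : ℝ) ^ n
        = ((Fintype.card F : ℝ) / 2) ^ n / n.factorial := by rw [div_pow]; ring
      _ ≤ ((Fintype.card F : ℝ) - 1) ^ n / n.factorial := by gcongr; linarith
      _ ≤ (n + Fintype.card F - 2).choose n := Nat.sub_one_pow_div_factorial_le_choose hq
      _ ≤ B.ncard := by exact_mod_cast hB.choose_le_ncard
end

section
/- Every Nikodym set B in F_q^2 satisfies |B| >= (2/3) q^2 - (7/3) q. -/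
open Finset

section Geometry

variable {F : Type} [Field F]

def IsNorm (v : Fin 2 → F) : Prop := v 0 = 1 ∨ (v 0 = 0 ∧ v 1 = 1)

lemma vec_eq {v w : Fin 2 → F} (h0 : v 0 = w 0) (h1 : v 1 = w 1) : v = w := by
  funext i; fin_cases i <;> assumption

lemma IsNorm.ne_zero {v : Fin 2 → F} (h : IsNorm v) : v ≠ 0 := by
  rcases h with h | ⟨h0, h1⟩
  · intro hv; rw [hv] at h; simp at h
  · intro hv; rw [hv] at h1; simp at h1

lemma line_smul (a v : Fin 2 → F) {c : F} (hc : c ≠ 0) : line a (c • v) = line a v := by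
  ext y
  constructor
  · rintro ⟨t, rfl⟩; exact ⟨t * c, by rw [smul_smul]⟩
  · rintro ⟨t, rfl⟩
    exact ⟨t * c⁻¹, by rw [smul_smul, mul_assoc, inv_mul_cancel₀ hc, mul_one]⟩

lemma exists_norm (v : Fin 2 → F) (hv : v ≠ 0) :
    ∃ v' : Fin 2 → F, IsNorm v' ∧ ∀ a, line a v' = line a v := by
  by_cases h0 : v 0 = 0
  · have h1 : v 1 ≠ 0 := by
      intro h1
      exact hv (vec_eq (by simpa using h0) (by simpa using h1))
    refine ⟨(v 1)⁻¹ • v, Or.inr ⟨?_, ?_⟩, fun a => line_smul a v (inv_ne_zero h1)⟩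
    · simp [h0]
    · simp [inv_mul_cancel₀ h1]
  · refine ⟨(v 0)⁻¹ • v, Or.inl ?_, fun a => line_smul a v (inv_ne_zero h0)⟩
    simp [inv_mul_cancel₀ h0]

lemma indep {v w : Fin 2 → F} (hv : IsNorm v) (hw : IsNorm w) (hvw : v ≠ w)
    {s t : F} (h : s • v = t • w) : s = 0 := by
  have h0 := congrFun h 0
  have h1 := congrFun h 1
  simp only [Pi.smul_apply, smul_eq_mul] at h0 h1
  rcases hv with hv1 | ⟨hv0, hv1⟩ <;> rcases hw with hw1 | ⟨hw0, hw1⟩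
  · rw [hv1, hw1, mul_one, mul_one] at h0
    by_contra hs
    subst h0
    exact hvw (vec_eq (hv1.trans hw1.symm) (mul_left_cancel₀ hs h1))
  · rw [hv1, hw0, mul_one, mul_zero] at h0; exact h0
  · rw [hv0, mul_zero, hw1, mul_one] at h0
    rw [hv1, mul_one, ← h0, zero_mul] at h1
    exact h1
  · exact absurd (vec_eq (hv0.trans hw0.symm) (hv1.trans hw1.symm)) hvw

variable [Fintype F] [DecidableEq F]

def lineF (a v : Fin 2 → F) : Finset (Fin 2 → F) :=
  Finset.image (fun t : F => a + t • v) Finset.univ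

lemma mem_lineF {a v y : Fin 2 → F} : y ∈ lineF a v ↔ y ∈ line a v := by
  simp [lineF, line, eq_comm]

lemma card_lineF (a : Fin 2 → F) {v : Fin 2 → F} (hv : v ≠ 0) :
    (lineF a v).card = Fintype.card F := by
  rw [lineF, Finset.card_image_of_injective _ ?_, Finset.card_univ]
  intro s t h
  obtain ⟨i, hi⟩ := Function.ne_iff.mp hv
  have h2 := congrFun (add_left_cancel h) i
  simp only [Pi.smul_apply, smul_eq_mul] at h2
  exact mul_right_cancel₀ (by simpa using hi) h2

lemma lineF_subset {a b v : Fin 2 → F} (h : a ∈ lineF b v) : lineF a v ⊆ lineF b v := by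
  rw [mem_lineF] at h
  obtain ⟨s, rfl⟩ := h
  intro y hy
  rw [mem_lineF] at hy ⊢
  obtain ⟨u, rfl⟩ := hy
  exact ⟨s + u, by rw [add_assoc, add_smul]⟩

lemma lineF_self (a v : Fin 2 → F) : a ∈ lineF a v := by
  rw [mem_lineF]; exact ⟨0, by simp⟩

lemma lineF_para {a b v p : Fin 2 → F} (hp : p ∈ lineF a v) (hq : p ∈ lineF b v) :
    lineF a v = lineF b v := by
  rw [mem_lineF] at hp hq
  obtain ⟨t, rfl⟩ := hp
  obtain ⟨s, hs⟩ := hq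
  have ha : a ∈ lineF b v := by
    rw [mem_lineF]
    refine ⟨s - t, ?_⟩
    have : a = (a + t • v) - t • v := by abel
    rw [this, hs, sub_smul]
    abel
  have hb : b ∈ lineF a v := by
    rw [mem_lineF]
    refine ⟨t - s, ?_⟩
    have : b = (b + s • v) - s • v := by abel
    rw [this, ← hs, sub_smul]
    abel
  exact le_antisymm (lineF_subset ha) (lineF_subset hb)

lemma card_inter_lineF {a b v w : Fin 2 → F} (hv : IsNorm v) (hw : IsNorm w) (hvw : v ≠ w) :
    (lineF a v ∩ lineF b w).card ≤ 1 := by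
  rw [Finset.card_le_one]
  intro p hp q hq
  rw [Finset.mem_inter, mem_lineF, mem_lineF] at hp hq
  obtain ⟨⟨t1, ht1⟩, ⟨s1, hs1⟩⟩ := hp
  obtain ⟨⟨t2, ht2⟩, ⟨s2, hs2⟩⟩ := hq
  have hvec : (t1 - t2) • v = (s1 - s2) • w := by
    rw [sub_smul, sub_smul]
    have e1 : t1 • v = p - a := by rw [ht1]; abel
    have e2 : t2 • v = q - a := by rw [ht2]; abel
    have e3 : s1 • w = p - b := by rw [hs1]; abel
    have e4 : s2 • w = q - b := by rw [hs2]; abel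
    rw [e1, e2, e3, e4]
    abel
  have : t1 - t2 = 0 := indep hv hw hvw hvec
  have ht : t1 = t2 := by linear_combination this
  rw [ht1, ht2, ht]

def dirv (v : Fin 2 → F) : Option F := if v 0 = 1 then some (v 1) else none

lemma dirv_inj {v w : Fin 2 → F} (hv : IsNorm v) (hw : IsNorm w) (h : dirv v = dirv w) :
    v = w := by
  rcases hv with hv1 | ⟨hv0, hv1⟩ <;> rcases hw with hw1 | ⟨hw0, hw1⟩
  · rw [dirv, dirv, if_pos hv1, if_pos hw1] at h
    exact vec_eq (hv1.trans hw1.symm) (Option.some_injective _ h)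
  · rw [dirv, dirv, if_pos hv1, if_neg (by rw [hw0]; exact zero_ne_one)] at h
    simp at h
  · rw [dirv, dirv, if_neg (by rw [hv0]; exact zero_ne_one), if_pos hw1] at h
    simp at h
  · exact vec_eq (hv0.trans hw0.symm) (hv1.trans hw1.symm)

end Geometry

section Counting

lemma greedy {ι : Type} [DecidableEq ι] (w : ι → ℕ) (s : Finset ι) (N : ℕ) (hN : 1 ≤ N)
    (hsum : N ≤ ∑ i ∈ s, w i) :
    ∃ t ⊆ s, ∃ j ∈ t, N ≤ ∑ i ∈ t, w i ∧ (∑ i ∈ t, w i) < N + w j ∧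
      (∀ i ∈ t, w j ≤ w i) ∧ ∀ i ∈ s, i ∉ t → w i ≤ w j := by
  induction s using Finset.strongInduction generalizing N with
  | _ s ih =>
    have hne : s.Nonempty := by
      rcases Finset.eq_empty_or_nonempty s with rfl | h
      · simp at hsum; omega
      · exact h
    obtain ⟨j0, hj0s, hj0max⟩ := s.exists_max_image w hne
    by_cases hcase : N ≤ w j0
    · refine ⟨{j0}, by simpa using hj0s, j0, by simp, by simpa using hcase, ?_, ?_, ?_⟩
      · simp; omega
      · intro i hi; simp at hi; subst hi; exact le_refl _
      · intro i _ hi; simp at hi; exact hj0max i ‹i ∈ s›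
    · push_neg at hcase
      have hsub : s.erase j0 ⊂ s := Finset.erase_ssubset hj0s
      have hsum' : N - w j0 ≤ ∑ i ∈ s.erase j0, w i := by
        have := Finset.sum_erase_add s w hj0s
        omega
      obtain ⟨t', ht's, j, hjt', hge, hlt, hmin, hout⟩ :=
        ih (s.erase j0) hsub (N - w j0) (by omega) hsum'
      have hj0t' : j0 ∉ t' := fun h => (Finset.notMem_erase j0 s) (ht's h)
      refine ⟨insert j0 t', ?_, j, Finset.mem_insert_of_mem hjt', ?_, ?_, ?_, ?_⟩
      · intro i hi
        rcases Finset.mem_insert.mp hi with rfl | hi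
        · exact hj0s
        · exact Finset.mem_of_mem_erase (ht's hi)
      · rw [Finset.sum_insert hj0t']; omega
      · rw [Finset.sum_insert hj0t']; omega
      · intro i hi
        rcases Finset.mem_insert.mp hi with rfl | hi
        · exact hj0max j (Finset.mem_of_mem_erase (ht's hjt'))
        · exact hmin i hi
      · intro i his hit
        have : i ∈ s.erase j0 := Finset.mem_erase.mpr
          ⟨fun h => hit (h ▸ Finset.mem_insert_self j0 t'), his⟩
        exact hout i this (fun h => hit (Finset.mem_insert_of_mem h))

lemma bonferroni {ι α : Type} [DecidableEq ι] [DecidableEq α] (A : ι → Finset α)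
    (t : Finset ι) :
    2 * ∑ i ∈ t, (A i).card ≤
      2 * (t.biUnion A).card + ∑ i ∈ t, ∑ j ∈ t.erase i, (A i ∩ A j).card := by
  induction t using Finset.induction_on with
  | empty => simp
  | @insert a t ha ih =>
    rw [Finset.sum_insert ha, Finset.biUnion_insert]
    have hUn : (A a ∪ t.biUnion A).card + (A a ∩ t.biUnion A).card
        = (A a).card + (t.biUnion A).card := Finset.card_union_add_card_inter _ _
    have hIn : (A a ∩ t.biUnion A).card ≤ ∑ j ∈ t, (A a ∩ A j).card := by
      have : A a ∩ t.biUnion A = t.biUnion (fun j => A a ∩ A j) := by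
        ext p
        simp only [Finset.mem_inter, Finset.mem_biUnion]
        tauto
      rw [this]
      exact Finset.card_biUnion_le
    have hpair : ∑ i ∈ insert a t, ∑ j ∈ (insert a t).erase i, (A i ∩ A j).card
        = ∑ j ∈ t, (A a ∩ A j).card + ∑ i ∈ t, (A i ∩ A a).card
          + ∑ i ∈ t, ∑ j ∈ t.erase i, (A i ∩ A j).card := by
      rw [Finset.sum_insert ha, Finset.erase_insert ha]
      have : ∀ i ∈ t, ∑ j ∈ (insert a t).erase i, (A i ∩ A j).card
          = (A i ∩ A a).card + ∑ j ∈ t.erase i, (A i ∩ A j).card := by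
        intro i hi
        have hia : a ≠ i := fun h => ha (h ▸ hi)
        rw [Finset.erase_insert_of_ne hia,
          Finset.sum_insert (fun h => ha (Finset.mem_of_mem_erase h))]
      rw [Finset.sum_congr rfl this, Finset.sum_add_distrib]
      ring
    have hsym : ∑ i ∈ t, (A i ∩ A a).card = ∑ j ∈ t, (A a ∩ A j).card := by
      apply Finset.sum_congr rfl
      intro i _
      rw [Finset.inter_comm]
    rw [hpair, hsym]
    omega

end Counting


lemma arith_main (Q Mr Ar Br Mm Db U : ℝ)
    (hQ : 2 ≤ Q)
    (r1 : 2*(Q*Mr) ≤ 2*U + Db)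
    (r3' : U ≤ Br + Mr)
    (r4 : Db + Mr*Ar ≤ Mr*Mr)
    (r2 : Q ≤ Mr + 1)
    (r3 : Mr + 2 ≤ Q + Ar)
    (r6 : 1 ≤ Ar)
    (r45 : Mm ≤ Mr + Q*Ar)
    (r5 : Mm + Br = Q^2) :
    2/3*Q^2 - 7/3*Q ≤ Br := by
  have hprod : (0:ℝ) ≤ (Mr - (Q-1)) * ((Q-1+Ar) - Mr) :=
    mul_nonneg (by linarith) (by linarith)
  have h5 : 2*Br ≥ (Q-1)*(Q-1+Ar) := by nlinarith [hprod, r1, r4, r3']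
  have h6 : Q^2 - Br ≤ Q - 2 + Ar + Q*Ar := by linarith
  have h8 : (Q-1)*Ar ≤ 2*Br - (Q-1)^2 := by nlinarith [h5]
  have h9 : (Q+1)*((Q-1)*Ar) ≤ (Q+1)*(2*Br - (Q-1)^2) :=
    mul_le_mul_of_nonneg_left h8 (by linarith)
  have h10 : (Q-1)*(Q^2-Br) ≤ (Q-1)*(Q - 2 + Ar + Q*Ar) :=
    mul_le_mul_of_nonneg_left h6 (by linarith)
  have hb1 : Br*(3*Q+1) ≥ (Q-1)*(2*Q^2-Q+1) := by nlinarith [h9, h10]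
  have h3Q : (0:ℝ) < 3*Q+1 := by linarith
  nlinarith [hb1, hQ, h3Q, sq_nonneg (Q - 2)]

lemma arith_small (Q Mm Br : ℝ) (hQ : 2 ≤ Q) (hmle : Mm + 2 ≤ Q) (hBr : 0 ≤ Br)
    (r5 : Mm + Br = Q^2) : 2/3*Q^2 - 7/3*Q ≤ Br := by
  nlinarith [r5, hQ, hmle]

lemma key {F : Type} [Field F] [Fintype F] [DecidableEq F]
    (B : Set (Fin 2 → F))
    (L : (Fin 2 → F) → Finset (Fin 2 → F)) (V : (Fin 2 → F) → (Fin 2 → F))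
    (hNorm : ∀ x, x ∉ B → IsNorm (V x))
    (hxL : ∀ x, x ∉ B → x ∈ L x)
    (hTan : ∀ x, x ∉ B → ∀ y ∈ L x, y ∉ B → y = x)
    (hcard : ∀ x, x ∉ B → (L x).card = Fintype.card F)
    (hpara : ∀ x, x ∉ B → ∀ y, y ∉ B → V x = V y → L x = L y ∨ Disjoint (L x) (L y))
    (hskew : ∀ x, x ∉ B → ∀ y, y ∉ B → V x ≠ V y → (L x ∩ L y).card ≤ 1) :
    (B.ncard : ℝ) ≥ 2 / 3 * (Fintype.card F : ℝ) ^ 2 - 7 / 3 * (Fintype.card F : ℝ) := by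
  classical
  set q := Fintype.card F with hq
  have hq2 : 2 ≤ q := Fintype.one_lt_card
  set Cfin := Bᶜ.toFinset with hCfin
  set Bfin := B.toFinset with hBfin
  have hCmem : ∀ x, x ∈ Cfin ↔ x ∉ B := by
    intro x; rw [hCfin, Set.mem_toFinset, Set.mem_compl_iff]
  have hncard : B.ncard = Bfin.card := Set.ncard_eq_toFinset_card' B
  set b := Bfin.card with hb
  set m := Cfin.card with hm
  have htot : m + b = q ^ 2 := by
    have h1 : Bfin.card + Bfinᶜ.card = Fintype.card (Fin 2 → F) :=
      Finset.card_add_card_compl _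
    have h2 : Cfin = Bfinᶜ := by
      ext x
      rw [hCmem x, Finset.mem_compl, hBfin, Set.mem_toFinset]
    have h3 : Fintype.card (Fin 2 → F) = q ^ 2 := by
      rw [Fintype.card_fun, Fintype.card_fin]
    rw [hm, hb, h2]
    omega
  set Cl : Option F → Finset (Fin 2 → F) :=
    fun d => Cfin.filter (fun x => dirv (V x) = d) with hCl
  have hClmem : ∀ d x, x ∈ Cl d ↔ (x ∉ B ∧ dirv (V x) = d) := by
    intro d x
    simp only [hCl, Finset.mem_filter]
    rw [hCmem x]
  have hmsum : m = ∑ d : Option F, (Cl d).card := by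
    simp only [hm, hCl]
    exact Finset.card_eq_sum_card_fiberwise (fun x _ => Finset.mem_univ _)
  have hdisj : ∀ d : Option F, ∀ x ∈ Cl d, ∀ y ∈ Cl d, x ≠ y → Disjoint (L x) (L y) := by
    intro d x hx y hy hxy
    obtain ⟨hxB, hxd⟩ := (hClmem d x).1 hx
    obtain ⟨hyB, hyd⟩ := (hClmem d y).1 hy
    have hV : V x = V y := dirv_inj (hNorm x hxB) (hNorm y hyB) (hxd.trans hyd.symm)
    rcases hpara x hxB y hyB hV with heq | hd
    · exact absurd (hTan y hyB x (heq ▸ hxL x hxB) hxB) hxy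
    · exact hd
  set A : Option F → Finset (Fin 2 → F) := fun d => (Cl d).biUnion L with hA
  have hA1 : ∀ d, (A d).card = q * (Cl d).card := by
    intro d
    simp only [hA]
    rw [Finset.card_biUnion (hdisj d)]
    rw [Finset.sum_congr rfl (fun x hx => hcard x ((hClmem d x).1 hx).1)]
    rw [Finset.sum_const, smul_eq_mul, mul_comm]
  have hA2 : ∀ d d', d ≠ d' → (A d ∩ A d').card ≤ (Cl d).card * (Cl d').card := by
    intro d d' hdd
    have hinner : ∀ x ∈ Cl d, (L x ∩ A d').card ≤ (Cl d').card := by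
      intro x hx
      obtain ⟨hxB, hxd⟩ := (hClmem d x).1 hx
      have hsub : L x ∩ A d' ⊆ (Cl d').biUnion (fun y => L x ∩ L y) := by
        intro p hp
        rw [Finset.mem_inter] at hp
        have hp2 := hp.2
        simp only [hA] at hp2
        obtain ⟨y, hy, hpy⟩ := Finset.mem_biUnion.mp hp2
        exact Finset.mem_biUnion.mpr ⟨y, hy, Finset.mem_inter.mpr ⟨hp.1, hpy⟩⟩
      calc (L x ∩ A d').card ≤ ((Cl d').biUnion (fun y => L x ∩ L y)).card :=
            Finset.card_le_card hsub
        _ ≤ ∑ y ∈ Cl d', (L x ∩ L y).card := Finset.card_biUnion_le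
        _ ≤ ∑ y ∈ Cl d', 1 := by
            refine Finset.sum_le_sum (fun y hy => ?_)
            obtain ⟨hyB, hyd⟩ := (hClmem d' y).1 hy
            refine hskew x hxB y hyB (fun hV => hdd ?_)
            rw [← hxd, ← hyd, hV]
        _ = (Cl d').card := by rw [Finset.sum_const, smul_eq_mul, mul_one]
    have hsub2 : A d ∩ A d' ⊆ (Cl d).biUnion (fun x => L x ∩ A d') := by
      intro p hp
      rw [Finset.mem_inter] at hp
      have hp1 := hp.1
      simp only [hA] at hp1
      obtain ⟨x, hx, hpx⟩ := Finset.mem_biUnion.mp hp1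
      exact Finset.mem_biUnion.mpr ⟨x, hx, Finset.mem_inter.mpr ⟨hpx, hp.2⟩⟩
    calc (A d ∩ A d').card ≤ ((Cl d).biUnion (fun x => L x ∩ A d')).card :=
          Finset.card_le_card hsub2
      _ ≤ ∑ x ∈ Cl d, (L x ∩ A d').card := Finset.card_biUnion_le
      _ ≤ ∑ x ∈ Cl d, (Cl d').card := Finset.sum_le_sum hinner
      _ = (Cl d).card * (Cl d').card := by rw [Finset.sum_const, smul_eq_mul]
  rw [ge_iff_le, hncard]
  have hq2R : (2:ℝ) ≤ (q:ℝ) := by exact_mod_cast hq2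
  have r5 : (m:ℝ) + (b:ℝ) = (q:ℝ)^2 := by exact_mod_cast htot
  by_cases hcase : q - 1 ≤ m
  · have h1N : 1 ≤ q - 1 := by omega
    obtain ⟨t, hts, j, hjt, hge, hlt, hmin, hout⟩ :=
      greedy (fun d => (Cl d).card) Finset.univ (q - 1) h1N
        (by rw [← hmsum]; exact hcase)
    set M := ∑ i ∈ t, (Cl i).card with hM
    set aN := (Cl j).card with haN
    set Dbl := ∑ i ∈ t, ∑ j' ∈ t.erase i, (A i ∩ A j').card with hDbl
    have s2 : ∑ d ∈ t, (A d).card = q * M := by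
      rw [hM, Finset.mul_sum]
      exact Finset.sum_congr rfl (fun d _ => hA1 d)
    have s1 : 2 * (q * M) ≤ 2 * (t.biUnion A).card + Dbl := by
      rw [← s2, hDbl]; exact bonferroni A t
    have s3 : (t.biUnion A).card ≤ b + M := by
      have hsplit : t.biUnion A ⊆ (t.biUnion A ∩ Bfin) ∪ (t.biUnion A ∩ Cfin) := by
        intro p hp
        by_cases hpB : p ∈ B
        · exact Finset.mem_union_left _ (Finset.mem_inter.mpr
            ⟨hp, by rw [hBfin, Set.mem_toFinset]; exact hpB⟩)
        · exact Finset.mem_union_right _ (Finset.mem_inter.mpr ⟨hp, (hCmem p).2 hpB⟩)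
      have hUC : t.biUnion A ∩ Cfin ⊆ t.biUnion Cl := by
        intro p hp
        rw [Finset.mem_inter] at hp
        obtain ⟨d, hd, hpA⟩ := Finset.mem_biUnion.mp hp.1
        have hp2 := hpA
        simp only [hA] at hp2
        obtain ⟨x, hx, hpx⟩ := Finset.mem_biUnion.mp hp2
        have hpB : p ∉ B := (hCmem p).1 hp.2
        have hxB : x ∉ B := ((hClmem d x).1 hx).1
        have hpx2 : p = x := hTan x hxB p hpx hpB
        exact Finset.mem_biUnion.mpr ⟨d, hd, hpx2 ▸ hx⟩
      calc (t.biUnion A).card ≤ ((t.biUnion A ∩ Bfin) ∪ (t.biUnion A ∩ Cfin)).card :=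
            Finset.card_le_card hsplit
        _ ≤ (t.biUnion A ∩ Bfin).card + (t.biUnion A ∩ Cfin).card :=
            Finset.card_union_le _ _
        _ ≤ b + M := by
            refine Nat.add_le_add ?_ ?_
            · exact Finset.card_le_card Finset.inter_subset_right
            · calc (t.biUnion A ∩ Cfin).card ≤ (t.biUnion Cl).card :=
                  Finset.card_le_card hUC
                _ ≤ ∑ d ∈ t, (Cl d).card := Finset.card_biUnion_le
    have s4 : Dbl + M * aN ≤ M * M := by
      have per : ∀ i ∈ t, (∑ j' ∈ t.erase i, (A i ∩ A j').card) + (Cl i).card * aN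
          ≤ (Cl i).card * M := by
        intro i hi
        have e1 : ∑ j' ∈ t.erase i, (A i ∩ A j').card
            ≤ ∑ j' ∈ t.erase i, (Cl i).card * (Cl j').card :=
          Finset.sum_le_sum (fun j' hj' => hA2 i j' (Finset.ne_of_mem_erase hj').symm)
        have e2 : ∑ j' ∈ t.erase i, (Cl i).card * (Cl j').card
            = (Cl i).card * ∑ j' ∈ t.erase i, (Cl j').card := by rw [Finset.mul_sum]
        have e3 : (∑ j' ∈ t.erase i, (Cl j').card) + (Cl i).card = M :=
          Finset.sum_erase_add t _ hi
        have e4 : aN ≤ (Cl i).card := hmin i hi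
        calc (∑ j' ∈ t.erase i, (A i ∩ A j').card) + (Cl i).card * aN
            ≤ (Cl i).card * (∑ j' ∈ t.erase i, (Cl j').card) + (Cl i).card * (Cl i).card := by
              rw [← e2]
              exact Nat.add_le_add e1 (Nat.mul_le_mul_left _ e4)
          _ = (Cl i).card * M := by rw [← Nat.mul_add, e3]
      have hsumper := Finset.sum_le_sum per
      rw [Finset.sum_add_distrib, ← Finset.sum_mul, ← Finset.sum_mul] at hsumper
      rw [← hM] at hsumper
      rw [hDbl]
      exact hsumper
    have hms : (∑ i ∈ Finset.univ \ t, (Cl i).card) + M = m := by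
      rw [hM, hmsum]
      exact Finset.sum_sdiff (Finset.subset_univ t)
    have houtb : ∑ i ∈ Finset.univ \ t, (Cl i).card ≤ (Finset.univ \ t).card * aN := by
      calc ∑ i ∈ Finset.univ \ t, (Cl i).card ≤ ∑ _i ∈ Finset.univ \ t, aN := by
            refine Finset.sum_le_sum (fun i hi => ?_)
            exact hout i (Finset.mem_univ i) (Finset.mem_sdiff.mp hi).2
        _ = (Finset.univ \ t).card * aN := by rw [Finset.sum_const, smul_eq_mul]
    have hcardsd : (Finset.univ \ t).card ≤ q := by
      have h1 : (Finset.univ : Finset (Option F)).card = q + 1 := by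
        rw [Finset.card_univ, Fintype.card_option]
      have h2 : 1 ≤ t.card := Finset.card_pos.mpr ⟨j, hjt⟩
      have h3 : (Finset.univ \ t).card = (Finset.univ : Finset (Option F)).card - t.card :=
        Finset.card_sdiff_of_subset (Finset.subset_univ t)
      omega
    have F3 : m ≤ M + q * aN := by
      calc m = (∑ i ∈ Finset.univ \ t, (Cl i).card) + M := hms.symm
        _ ≤ (Finset.univ \ t).card * aN + M := Nat.add_le_add_right houtb M
        _ ≤ q * aN + M := Nat.add_le_add_right (Nat.mul_le_mul_right _ hcardsd) M
        _ = M + q * aN := Nat.add_comm _ _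
    -- cast to reals
    have r1 : 2*((q:ℝ)*(M:ℝ)) ≤ 2*(((t.biUnion A).card : ℝ)) + (Dbl:ℝ) := by
      exact_mod_cast s1
    have r3' : ((t.biUnion A).card : ℝ) ≤ (b:ℝ) + (M:ℝ) := by exact_mod_cast s3
    have r4 : (Dbl:ℝ) + (M:ℝ)*(aN:ℝ) ≤ (M:ℝ)*(M:ℝ) := by exact_mod_cast s4
    have r2 : (q:ℝ) ≤ (M:ℝ) + 1 := by exact_mod_cast (show q ≤ M + 1 by omega)
    have r3 : (M:ℝ) + 2 ≤ (q:ℝ) + (aN:ℝ) := by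
      exact_mod_cast (show M + 2 ≤ q + aN by omega)
    have r6 : (1:ℝ) ≤ (aN:ℝ) := by exact_mod_cast (show 1 ≤ aN by omega)
    have r45 : (m:ℝ) ≤ (M:ℝ) + (q:ℝ)*(aN:ℝ) := by exact_mod_cast F3
    exact arith_main (q:ℝ) (M:ℝ) (aN:ℝ) (b:ℝ) (m:ℝ) (Dbl:ℝ) ((t.biUnion A).card : ℝ)
      hq2R r1 r3' r4 r2 r3 r6 r45 r5
  · push_neg at hcase
    have hmle : (m:ℝ) + 2 ≤ (q:ℝ) := by exact_mod_cast (show m + 2 ≤ q by omega)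
    exact arith_small (q:ℝ) (m:ℝ) (b:ℝ) hq2R hmle (Nat.cast_nonneg b) r5

theorem stmt_6 (F : Type) [Field F] [Fintype F]
    (B : Set (Fin 2 → F)) (hB : IsNikodym B) :
    (B.ncard : ℝ) ≥ 2 / 3 * (Fintype.card F : ℝ) ^ 2 - 7 / 3 * (Fintype.card F : ℝ) := by
  classical
  have hB3 : ∀ x : Fin 2 → F, ∃ p : (Fin 2 → F) × (Fin 2 → F),
      x ∉ B → IsNorm p.2 ∧ x ∈ lineF p.1 p.2 ∧ ∀ y ∈ lineF p.1 p.2, y ∉ B → y = x := by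
    intro x
    by_cases hx : x ∈ B
    · exact ⟨(x, x), fun h => absurd hx h⟩
    · obtain ⟨a, v, hv, hl⟩ := hB x hx
      obtain ⟨v', hn, hlv⟩ := exists_norm v hv
      refine ⟨(a, v'), fun _ => ⟨hn, ?_, ?_⟩⟩
      · rw [mem_lineF, hlv a]
        have hx2 : x ∈ line a v ∩ Bᶜ := by rw [hl]; exact Set.mem_singleton x
        exact hx2.1
      · intro y hy hyB
        have hy2 : y ∈ line a v ∩ Bᶜ := ⟨by rw [← hlv a, ← mem_lineF]; exact hy, hyB⟩
        rw [hl] at hy2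
        exact hy2
  choose f hf using hB3
  refine key B (fun x => lineF (f x).1 (f x).2) (fun x => (f x).2)
    (fun x hx => (hf x hx).1) (fun x hx => (hf x hx).2.1) (fun x hx => (hf x hx).2.2)
    (fun x hx => card_lineF _ (hf x hx).1.ne_zero) ?_ ?_
  · intro x hx y hy hV
    by_cases hd : Disjoint (lineF (f x).1 (f x).2) (lineF (f y).1 (f y).2)
    · exact Or.inr hd
    · left
      obtain ⟨p, hp1, hp2⟩ := Finset.not_disjoint_iff.mp hd
      have hV' : (f x).2 = (f y).2 := hV
      show lineF (f x).1 (f x).2 = lineF (f y).1 (f y).2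
      rw [hV'] at hp1 ⊢
      exact lineF_para hp1 hp2
  · intro x hx y hy hV
    exact card_inter_lineF (hf x hx).1 (hf y hy).1 hV
end

section
/- Let B be a subset of F_q^2 and s a nonnegative integer. Suppose there exist lines X_1,...,X_s pairwise parallel in one direction, Y_1,...,Y_s pairwise parallel in a second distinct direction, and Z_1,...,Z_s pairwise parallel in a third distinct direction, such that each of these 3s lines contains at least q-1 points of B. Then |B| >= 3s(q-1-s). -/
lemma line_eq_of_mem {n : ℕ} {F : Type} [Field F] {a v y : Fin n → F}
    (h : y ∈ line a v) : line y v = line a v := by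
  obtain ⟨t, rfl⟩ := h
  ext z
  simp only [line, Set.mem_setOf_eq]
  constructor
  · rintro ⟨r, rfl⟩; exact ⟨t + r, by rw [add_smul]; abel⟩
  · rintro ⟨r, rfl⟩; exact ⟨r - t, by rw [sub_smul]; abel⟩

lemma line_disjoint {n : ℕ} {F : Type} [Field F] {a b v : Fin n → F}
    (h : line a v ≠ line b v) : Disjoint (line a v) (line b v) := by
  rw [Set.disjoint_left]
  intro y hya hyb
  exact h ((line_eq_of_mem hya).symm.trans (line_eq_of_mem hyb))

lemma line_inter_subsingleton {n : ℕ} {F : Type} [Field F] {a b u w : Fin n → F}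
    (hu : u ≠ 0) (h : ¬ ∃ c : F, w = c • u) :
    (line a u ∩ line b w).Subsingleton := by
  rintro y1 ⟨⟨t, rfl⟩, t', ht'⟩ y2 ⟨⟨s, hs⟩, s', hs'⟩
  have e2 : a + s • u = b + s' • w := by rw [← hs, hs']
  have key : (t - s) • u = (t' - s') • w := by
    calc (t - s) • u = (a + t • u) - (a + s • u) := by rw [sub_smul]; abel
    _ = (b + t' • w) - (b + s' • w) := by rw [ht', e2]
    _ = (t' - s') • w := by rw [sub_smul]; abel
  by_cases hc : t' = s'
  · have h0 : (t - s) • u = 0 := by rw [key, hc, sub_self, zero_smul]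
    have hts : t = s := by
      rcases smul_eq_zero.mp h0 with h1 | h1
      · exact sub_eq_zero.mp h1
      · exact absurd h1 hu
    rw [hs, hts]
  · exfalso
    apply h
    have hne : t' - s' ≠ 0 := sub_ne_zero.mpr hc
    refine ⟨(t' - s')⁻¹ * (t - s), ?_⟩
    rw [mul_smul, key, smul_smul, inv_mul_cancel₀ hne, one_smul]

theorem stmt_13 (F : Type) [Field F] [Fintype F]
    (B : Set (Fin 2 → F)) (s : ℕ)
    (u v w : Fin 2 → F) (hu : u ≠ 0) (hv : v ≠ 0) (hw : w ≠ 0)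
    (huv : ¬ ∃ c : F, v = c • u) (huw : ¬ ∃ c : F, w = c • u)
    (hvw : ¬ ∃ c : F, w = c • v)
    (aX aY aZ : Fin s → (Fin 2 → F))
    (hX : ∀ i j, i ≠ j → line (aX i) u ≠ line (aX j) u)
    (hY : ∀ i j, i ≠ j → line (aY i) v ≠ line (aY j) v)
    (hZ : ∀ i j, i ≠ j → line (aZ i) w ≠ line (aZ j) w)
    (hXB : ∀ i, Fintype.card F - 1 ≤ (line (aX i) u ∩ B).ncard)
    (hYB : ∀ i, Fintype.card F - 1 ≤ (line (aY i) v ∩ B).ncard)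
    (hZB : ∀ i, Fintype.card F - 1 ≤ (line (aZ i) w ∩ B).ncard) :
    3 * s * (Fintype.card F - 1 - s) ≤ B.ncard := by
  classical
  set m := Fintype.card F - 1 with hm
  rcases Nat.lt_or_ge m s with hms | hms
  · rw [Nat.sub_eq_zero_of_le (le_of_lt hms), mul_zero]
    exact Nat.zero_le _
  -- Finset versions
  set TX : Fin s → Finset (Fin 2 → F) := fun i => (Set.toFinite (line (aX i) u ∩ B)).toFinset with hTX
  set TY : Fin s → Finset (Fin 2 → F) := fun i => (Set.toFinite (line (aY i) v ∩ B)).toFinset with hTY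
  set TZ : Fin s → Finset (Fin 2 → F) := fun i => (Set.toFinite (line (aZ i) w ∩ B)).toFinset with hTZ
  set XB := Finset.univ.biUnion TX with hXBdef
  set YB := Finset.univ.biUnion TY with hYBdef
  set ZB := Finset.univ.biUnion TZ with hZBdef
  set BF := (Set.toFinite B).toFinset with hBF
  -- lower bounds on XB etc.
  have cardT : ∀ (a' : Fin s → Fin 2 → F) (d : Fin 2 → F) i,
      ((Set.toFinite (line (a' i) d ∩ B)).toFinset).card = (line (a' i) d ∩ B).ncard := by
    intro a' d i
    exact (Set.ncard_eq_toFinset_card _ _).symm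
  have hXcard : s * m ≤ XB.card := by
    rw [hXBdef, Finset.card_biUnion]
    · calc s * m = ∑ _i : Fin s, m := by simp [Finset.sum_const, mul_comm]
      _ ≤ ∑ i : Fin s, (TX i).card := by
          apply Finset.sum_le_sum
          intro i _
          rw [hTX]; rw [cardT aX u i]; exact hXB i
    · intro i _ j _ hij
      rw [hTX]
      simp only [Set.Finite.disjoint_toFinset]
      exact Set.disjoint_of_subset Set.inter_subset_left Set.inter_subset_left
        (line_disjoint (hX i j hij))
  have hYcard : s * m ≤ YB.card := by
    rw [hYBdef, Finset.card_biUnion]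
    · calc s * m = ∑ _i : Fin s, m := by simp [Finset.sum_const, mul_comm]
      _ ≤ ∑ i : Fin s, (TY i).card := by
          apply Finset.sum_le_sum
          intro i _
          rw [hTY]; rw [cardT aY v i]; exact hYB i
    · intro i _ j _ hij
      rw [hTY]
      simp only [Set.Finite.disjoint_toFinset]
      exact Set.disjoint_of_subset Set.inter_subset_left Set.inter_subset_left
        (line_disjoint (hY i j hij))
  have hZcard : s * m ≤ ZB.card := by
    rw [hZBdef, Finset.card_biUnion]
    · calc s * m = ∑ _i : Fin s, m := by simp [Finset.sum_const, mul_comm]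
      _ ≤ ∑ i : Fin s, (TZ i).card := by
          apply Finset.sum_le_sum
          intro i _
          rw [hTZ]; rw [cardT aZ w i]; exact hZB i
    · intro i _ j _ hij
      rw [hTZ]
      simp only [Set.Finite.disjoint_toFinset]
      exact Set.disjoint_of_subset Set.inter_subset_left Set.inter_subset_left
        (line_disjoint (hZ i j hij))
  -- intersections small
  have interSmall : ∀ (a1 a2 : Fin s → Fin 2 → F) (d1 d2 : Fin 2 → F),
      d1 ≠ 0 → (¬ ∃ c : F, d2 = c • d1) →
      ((Finset.univ.biUnion fun i => (Set.toFinite (line (a1 i) d1 ∩ B)).toFinset) ∩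
       (Finset.univ.biUnion fun i => (Set.toFinite (line (a2 i) d2 ∩ B)).toFinset)).card ≤ s * s := by
    intro a1 a2 d1 d2 hd1 hnd
    have hsub : ((Finset.univ.biUnion fun i => (Set.toFinite (line (a1 i) d1 ∩ B)).toFinset) ∩
       (Finset.univ.biUnion fun i => (Set.toFinite (line (a2 i) d2 ∩ B)).toFinset)) ⊆
        (Finset.univ : Finset (Fin s × Fin s)).biUnion
          (fun p => (Set.toFinite (line (a1 p.1) d1 ∩ line (a2 p.2) d2)).toFinset) := by
      intro y hy
      simp only [Finset.mem_inter, Finset.mem_biUnion, Set.Finite.mem_toFinset,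
        Set.mem_inter_iff, Finset.mem_univ, true_and] at hy ⊢
      obtain ⟨⟨i, hi1, _⟩, ⟨j, hj1, _⟩⟩ := hy
      exact ⟨(i, j), hi1, hj1⟩
    calc _ ≤ _ := Finset.card_le_card hsub
      _ ≤ ∑ _p : Fin s × Fin s, 1 := by
          apply le_trans (Finset.card_biUnion_le)
          apply Finset.sum_le_sum
          intro p _
          rw [Finset.card_le_one]
          intro x hx y hy
          rw [Set.Finite.mem_toFinset] at hx hy
          exact line_inter_subsingleton hd1 hnd hx hy
      _ = s * s := by simp [Finset.sum_const, Fintype.card_prod]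
  have iXY : (XB ∩ YB).card ≤ s * s := interSmall aX aY u v hu huv
  have iXZ : (XB ∩ ZB).card ≤ s * s := interSmall aX aZ u w hu huw
  have iYZ : (YB ∩ ZB).card ≤ s * s := interSmall aY aZ v w hv hvw
  -- union inside B
  have hsubB : XB ∪ YB ∪ ZB ⊆ BF := by
    intro y hy
    rw [hBF, Set.Finite.mem_toFinset]
    simp only [Finset.mem_union, hXBdef, hYBdef, hZBdef, Finset.mem_biUnion,
      Set.Finite.mem_toFinset, hTX, hTY, hTZ, Set.mem_inter_iff] at hy
    rcases hy with (⟨i, _, _, hyB⟩ | ⟨i, _, _, hyB⟩) | ⟨i, _, _, hyB⟩ <;> exact hyB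
  have hBcard : (XB ∪ YB ∪ ZB).card ≤ B.ncard := by
    rw [Set.ncard_eq_toFinset_card B (Set.toFinite B)]
    exact Finset.card_le_card hsubB
  have e1 : (XB ∪ YB).card + (XB ∩ YB).card = XB.card + YB.card :=
    Finset.card_union_add_card_inter _ _
  have e2 : (XB ∪ YB ∪ ZB).card + ((XB ∪ YB) ∩ ZB).card = (XB ∪ YB).card + ZB.card :=
    Finset.card_union_add_card_inter _ _
  have e3 : ((XB ∪ YB) ∩ ZB).card ≤ (XB ∩ ZB).card + (YB ∩ ZB).card := by
    rw [Finset.union_inter_distrib_right]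
    exact Finset.card_union_le _ _
  have hP : s * (m - s) + s * s = s * m := by
    rw [← Nat.mul_add, Nat.sub_add_cancel hms]
  linarith [hXcard, hYcard, hZcard, iXY, iXZ, iYZ, hBcard, e1, e2, e3, hP]
end
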